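/- Let S be a spanoid on [n]. (a) If (S₁,...,S_n) is a union set-representation of S by subsets of a finite universe U = S₁ ∪ ... ∪ S_n with |S_i| ≤ ℓ for all i (where ℓ ≥ 1), then |U|/ℓ ≤ LP^cover(S); in particular every code obtained from such a representation via the construction C(x)_i = (x_u)_{u ∈ S_i}, x ∈ {0,1}^U, has dimension at most LP^cover(S). (b) Moreover f-rank(S) ≥ LP^cover(S): there exists a finite alphabet Σ and a code C ⊆ Σ^n consistent with S of dimension exactly LP^cover(S). -/

import Mathlib

open scoped BigOperators

/-- A spanoid on ground set `X`: a set of inference rules `(A, i)`,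
read as "`A` spans `i`". -/
abbrev SpanoidOn (X : Type) : Type := Set (Set X × X)

/-- The span of `T`: the smallest superset `T'` of `T` such that whenever `(A, i)` is a
rule with `A ⊆ T'`, also `i ∈ T'`. -/
def sSpan {X : Type} (S : SpanoidOn X) (T : Set X) : Set X :=
  ⋂₀ {T' : Set X | T ⊆ T' ∧ ∀ p ∈ S, p.1 ⊆ T' → p.2 ∈ T'}

/-- The rank of a spanoid: the minimum size of a subset spanning the whole ground set. -/
noncomputable def sRank {X : Type} [Fintype X] (S : SpanoidOn X) : ℕ :=
  sInf {k : ℕ | ∃ T : Set X, T.ncard = k ∧ sSpan S T = Set.univ}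

/-- A set is closed if it equals its own span. -/
def sClosed {X : Type} (S : SpanoidOn X) (B : Set X) : Prop := sSpan S B = B

/-- A set is open if its complement is closed. -/
def sOpen {X : Type} (S : SpanoidOn X) (B : Set X) : Prop := sClosed S Bᶜ

/-- A code `C ⊆ K^X` is consistent with the spanoid `S` if for every rule `(A, i)` of `S`
there is a function `g` with `c i = g (c|_A)` for all codewords `c ∈ C`. -/
def sConsistent {X K : Type} (S : SpanoidOn X) (C : Set (X → K)) : Prop :=
  ∀ p ∈ S, ∃ g : (↥p.1 → K) → K, ∀ c ∈ C, c p.2 = g (fun a => c a.1)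

/-- The functional rank of a spanoid: the supremum of `log |C| / log |Σ|` over all finite
alphabets `Σ` (of size at least 2) and all codes `C ⊆ Σ^X` consistent with `S`. -/
noncomputable def sFrank {X : Type} (S : SpanoidOn X) : ℝ :=
  sSup {d : ℝ | ∃ m : ℕ, 2 ≤ m ∧ ∃ C : Set (X → Fin m),
    sConsistent S C ∧ d = Real.log (Nat.card C) / Real.log m}

/-- Feasibility for the entropy linear program of a spanoid. -/
def sEntFeasible {X : Type} (S : SpanoidOn X) (f : Set X → ℝ) : Prop :=
  f ∅ = 0 ∧ (∀ i : X, f {i} ≤ 1) ∧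
  (∀ A B : Set X, f (A ∪ B) + f (A ∩ B) ≤ f A + f B) ∧
  (∀ A B : Set X, A ⊆ B → f A ≤ f B) ∧
  (∀ A : Set X, ∀ i ∈ sSpan S A, f (A ∪ {i}) = f A)

/-- The optimum of the entropy linear program: maximize `f(X)` over feasible `f`. -/
noncomputable def sLPentropy {X : Type} (S : SpanoidOn X) : ℝ :=
  sSup {y : ℝ | ∃ f : Set X → ℝ, sEntFeasible S f ∧ y = f Set.univ}

/-- The optimum of the covering linear program: minimize `∑ i, x i` over `x ≥ 0` such that
`∑_{i ∈ B} x i ≥ 1` for every nonempty open set `B`. -/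
noncomputable def sLPcover {X : Type} [Fintype X] (S : SpanoidOn X) : ℝ :=
  sInf {y : ℝ | ∃ x : X → ℝ, (∀ i, 0 ≤ x i) ∧
    (∀ B : Set X, B.Nonempty → sOpen S B → 1 ≤ ∑ i, B.indicator x i) ∧
    y = ∑ i, x i}

/-- A spanoid on `[n]` is a `q`-LCS with error-tolerance `δ` if every `i` is spanned by at
least `δ n` pairwise disjoint `q`-element subsets. -/
def sIsLCS {n : ℕ} (q : ℕ) (δ : ℝ) (S : SpanoidOn (Fin n)) : Prop :=
  ∀ i : Fin n, ∃ M : Finset (Finset (Fin n)),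
    δ * n ≤ (M.card : ℝ) ∧
    (∀ A ∈ M, A.card = q) ∧
    ((M : Set (Finset (Fin n))).Pairwise fun A B => Disjoint A B) ∧
    ∀ A ∈ M, ((A : Set (Fin n)), i) ∈ S

/-
By LP duality, `LP^cover(S)` is also the maximum of `∑ y_B` over packings `y ≥ 0` of the nonempty
open sets `B` with `∑_{B ∋ i} y_B ≤ 1` for every `i`. Farkas' lemma, proved by Fourier–Motzkin
elimination over an ordered field, yields a rational optimal cover and a rational optimal packing
of equal value.

(a) In a union set-representation, `{i | u ∈ S_i}` is open for every `u ∈ U`, so a fractional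
cover `x` has `∑_{i : u ∈ S_i} x_i ≥ 1`; summing over `u` gives `|U| ≤ ℓ ∑ x_i`.

(b) Scale an optimal packing to integers `s_B = N y_B`, give each open set `B` its own `s_B`
bits, and let coordinate `i` store the bits of all `B ∋ i`: at most `N` bits, one symbol of
`Fin (2 ^ N)`. For a rule `(A, i)` every open `B ∋ i` meets `A`, because `i` lies in the span of
`A`, so `c_i` is determined by `c|_A`. The code has `2 ^ ∑ s_B` words, hence dimension
`∑ s_B / N = ∑ y_B`.
-/

open Matrix

universe u

section Farkas

variable {𝕜 : Type*} [Field 𝕜] [LinearOrder 𝕜] [IsStrictOrderedRing 𝕜]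

theorem exists_forall_mul_le {K : Type*} [Fintype K] (α r : K → 𝕜)
    (hzero : ∀ k, α k = 0 → 0 ≤ r k)
    (hpair : ∀ p q, 0 < α p → α q < 0 → α q * r p ≤ α p * r q) :
    ∃ t, ∀ k, α k * t ≤ r k := by
  classical
  -- `t` is the largest lower bound `r q / α q`; the first element is below every upper bound
  set L := insert (-∑ k, |r k / α k|) ((Finset.univ.filter (α · < 0)).image fun q => r q / α q)
  have hL : L.Nonempty := Finset.insert_nonempty _ _
  refine ⟨L.max' hL, fun k => ?_⟩
  rcases lt_trichotomy (α k) 0 with hneg | hk | hpos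
  · have : r k / α k ≤ L.max' hL :=
      L.le_max' _ (Finset.mem_insert_of_mem (Finset.mem_image_of_mem _ (by simpa using hneg)))
    rwa [div_le_iff_of_neg hneg, mul_comm] at this
  · simpa [hk] using hzero k hk
  · have : L.max' hL ≤ r k / α k := by
      refine L.max'_le hL _ fun b hb => ?_
      rcases Finset.mem_insert.1 hb with rfl | hb
      · exact (neg_le_neg (Finset.single_le_sum (fun j _ => abs_nonneg (r j / α j))
          (Finset.mem_univ k))).trans (neg_abs_le _)
      · obtain ⟨q, hq, rfl⟩ := Finset.mem_image.1 hb
        have hq : α q < 0 := by simpa using hq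
        rw [div_le_iff_of_neg hq, div_mul_eq_mul_div, div_le_iff₀ hpos]
        linarith [hpair k q hpos hq]
    rwa [le_div_iff₀ hpos, mul_comm] at this

theorem exists_fourierMotzkin {K : Type u} [Fintype K] (α : K → 𝕜) :
    ∃ (K' : Type u) (_ : Fintype K') (W : Matrix K' K 𝕜), (∀ i k, 0 ≤ W i k) ∧ W *ᵥ α = 0 ∧
      ∀ r, 0 ≤ W *ᵥ r → ∃ t, ∀ k, α k * t ≤ r k := by
  classical
  let W : Matrix ({k // α k = 0} ⊕ {k // 0 < α k} × {k // α k < 0}) K 𝕜 :=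
    Matrix.of <| Sum.elim (fun k => Pi.single k.1 1)
      fun pq => α pq.1 • Pi.single pq.2.1 1 + (-α pq.2) • Pi.single pq.1.1 1
  have hrow : ∀ v : K → 𝕜, (∀ k (h : α k = 0), (W *ᵥ v) (.inl ⟨k, h⟩) = v k) ∧
      ∀ p q (hp : 0 < α p) (hq : α q < 0),
        (W *ᵥ v) (.inr (⟨p, hp⟩, ⟨q, hq⟩)) = α p * v q + -α q * v p := by
    intro v
    refine ⟨fun k h => ?_, fun p q hp hq => ?_⟩
    · exact single_dotProduct _ _ _ |>.trans (one_mul _)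
    · change (α p • Pi.single q (1 : 𝕜) + (-α q) • Pi.single p 1) ⬝ᵥ v = _
      simp [add_dotProduct, smul_dotProduct, single_dotProduct]
  refine ⟨_, inferInstance, W, ?_, ?_, fun r hr => exists_forall_mul_le α r
    (fun k h => (hrow r).1 k h ▸ hr (.inl ⟨k, h⟩))
    (fun p q hp hq => by
      have := hr (.inr (⟨p, hp⟩, ⟨q, hq⟩))
      rw [Pi.zero_apply, (hrow r).2 p q hp hq] at this
      linarith)⟩
  · have hsingle (k j : K) : (0 : 𝕜) ≤ (Pi.single k 1 : K → 𝕜) j := by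
      rw [Pi.single_apply]; split_ifs <;> norm_num
    rintro (k | ⟨⟨p, hp⟩, ⟨q, hq⟩⟩) j
    · exact hsingle _ j
    · exact add_nonneg (mul_nonneg hp.le (hsingle _ j))
        (mul_nonneg (neg_nonneg.2 hq.le) (hsingle _ j))
  · funext i
    rcases i with ⟨k, h⟩ | ⟨⟨p, hp⟩, ⟨q, hq⟩⟩
    · exact ((hrow α).1 k h).trans h
    · simp [(hrow α).2 p q hp hq, mul_comm]

theorem farkas_fin : ∀ (n : ℕ) {K : Type u} [Fintype K] (a : Matrix K (Fin n) 𝕜) (c : K → 𝕜),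
    (∃ x, a *ᵥ x ≤ c) ∨ ∃ l, 0 ≤ l ∧ l ᵥ* a = 0 ∧ l ⬝ᵥ c < 0
  | 0, K, _, a, c => by
    classical
    by_cases hc : 0 ≤ c
    · exact .inl ⟨0, by simpa using hc⟩
    · obtain ⟨k, hk⟩ : ∃ k, c k < 0 := by simpa [Pi.le_def] using hc
      exact .inr ⟨Pi.single k 1, Pi.single_nonneg.2 zero_le_one, funext fun j => j.elim0,
        by simpa [single_dotProduct] using hk⟩
  | n + 1, K, _, a, c => by
    obtain ⟨K', _, W, hW, hWα, hWr⟩ := exists_fourierMotzkin fun k => a k 0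
    rcases farkas_fin n (W * a.submatrix id Fin.succ) (W *ᵥ c) with
      ⟨x', hx'⟩ | ⟨l', hl', hl'a, hl'c⟩
    · obtain ⟨t, ht⟩ := hWr (c - a.submatrix id Fin.succ *ᵥ x') <| by
        rw [mulVec_sub, mulVec_mulVec]; exact sub_nonneg.2 hx'
      refine .inl ⟨Fin.cons t x', fun k => ?_⟩
      have hk : (a *ᵥ Fin.cons t x') k = a k 0 * t + (a.submatrix id Fin.succ *ᵥ x') k := by
        simp [mulVec, dotProduct, Fin.sum_univ_succ]
      have := ht k
      simp only [Pi.sub_apply] at this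
      linarith
    · refine .inr ⟨l' ᵥ* W, fun k => Finset.sum_nonneg fun i _ => mul_nonneg (hl' i) (hW i k),
        funext fun j => Fin.cases ?_ (fun j => ?_) j, by rwa [← dotProduct_mulVec]⟩
      · change (l' ᵥ* W) ⬝ᵥ (fun k => a k 0) = 0
        rw [← dotProduct_mulVec, hWα, dotProduct_zero]
      · change ((l' ᵥ* W) ᵥ* a.submatrix id Fin.succ) j = 0
        rw [vecMul_vecMul, hl'a, Pi.zero_apply]

theorem farkas {K V : Type u} [Fintype K] [Fintype V] (a : Matrix K V 𝕜) (c : K → 𝕜) :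
    (∃ x, a *ᵥ x ≤ c) ∨ ∃ l, 0 ≤ l ∧ l ᵥ* a = 0 ∧ l ⬝ᵥ c < 0 := by
  let e := Fintype.equivFin V
  rcases farkas_fin _ (a.submatrix id e.symm) c with ⟨x, hx⟩ | ⟨l, hl, hla, hlc⟩
  · exact .inl ⟨x ∘ e, by simpa [submatrix_mulVec_equiv] using hx⟩
  · refine .inr ⟨l, hl, funext fun v => ?_, hlc⟩
    have := congrFun hla (e v)
    rwa [show (l ᵥ* a.submatrix id e.symm) (e v) = (l ᵥ* a) v by simp [vecMul, dotProduct]]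
      at this

theorem farkas_nonneg {K V : Type u} [Fintype K] [Fintype V] (a : Matrix K V 𝕜) (c : K → 𝕜) :
    (∃ x, 0 ≤ x ∧ a *ᵥ x ≤ c) ∨ ∃ l, 0 ≤ l ∧ 0 ≤ l ᵥ* a ∧ l ⬝ᵥ c < 0 := by
  classical
  rcases farkas (fromRows a (-1 : Matrix V V 𝕜)) (Sum.elim c 0) with ⟨x, hx⟩ | ⟨l, hl, hla, hlc⟩
  · rw [fromRows_mulVec, Sum.elim_le_elim_iff] at hx
    exact .inl ⟨x, by simpa [neg_mulVec] using hx.2, hx.1⟩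
  · have hla : l ∘ Sum.inl ᵥ* a = l ∘ Sum.inr := by
      simpa [vecMul_neg, add_neg_eq_zero] using hla
    refine .inr ⟨l ∘ Sum.inl, fun k => hl _, hla ▸ fun v => hl _, ?_⟩
    simpa [dotProduct, Fintype.sum_sum_type] using hlc

end Farkas

section Duality

theorem mul_sum_le_mul_sum_of_le_mulVec {R O I : Type*} [CommSemiring R] [PartialOrder R]
    [IsOrderedRing R] [Fintype O] [Fintype I] (A : Matrix O I R) {x : I → R} {y : O → R}
    {s t : R} (hx : 0 ≤ x) (hy : 0 ≤ y) (hAx : ∀ o, s ≤ (A *ᵥ x) o)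
    (hyA : ∀ i, (y ᵥ* A) i ≤ t) : s * ∑ o, y o ≤ t * ∑ i, x i :=
  calc s * ∑ o, y o = ∑ o, y o * s := by rw [Finset.mul_sum]; simp_rw [mul_comm]
    _ ≤ ∑ o, y o * (A *ᵥ x) o :=
      Finset.sum_le_sum fun o _ => mul_le_mul_of_nonneg_left (hAx o) (hy o)
    _ = ∑ i, (y ᵥ* A) i * x i := dotProduct_mulVec y A x
    _ ≤ ∑ i, t * x i := Finset.sum_le_sum fun i _ => mul_le_mul_of_nonneg_right (hyA i) (hx i)
    _ = t * ∑ i, x i := (Finset.mul_sum ..).symm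

variable {𝕜 : Type*} [Field 𝕜] [LinearOrder 𝕜] [IsStrictOrderedRing 𝕜]

theorem exists_cover_packing_sum_eq {O I : Type u} [Fintype O] [Fintype I] (A : Matrix O I 𝕜)
    (hA : ∃ x, 0 ≤ x ∧ 1 ≤ A *ᵥ x) :
    ∃ x y, 0 ≤ x ∧ 1 ≤ A *ᵥ x ∧ 0 ≤ y ∧ y ᵥ* A ≤ 1 ∧ ∑ i, x i = ∑ o, y o := by
  classical
  obtain ⟨x₀, hx₀, hAx₀⟩ := hA
  -- the system `A x ≥ 1`, `y A ≤ 1`, `∑ x ≤ ∑ y` in the nonnegative variables `(x, y)`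
  rcases farkas_nonneg
      (fromRows (fromBlocks (-A) 0 0 Aᵀ) (replicateRow Unit (Sum.elim 1 (-1))))
      (Sum.elim (Sum.elim (-1) 1) 0) with ⟨z, hz, hMz⟩ | ⟨l, hl, hlM, hlc⟩
  · simp only [fromRows_mulVec, fromBlocks_mulVec, replicateRow_mulVec_eq_const,
      mulVec_transpose, Sum.elim_le_elim_iff, zero_mulVec, add_zero, zero_add, neg_mulVec,
      neg_le_neg_iff] at hMz
    obtain ⟨⟨hAx, hyA⟩, hsum⟩ := hMz
    have hsum : ∑ i, z (.inl i) ≤ ∑ o, z (.inr o) := by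
      simpa [dotProduct, Fintype.sum_sum_type, sub_nonpos] using hsum
    refine ⟨z ∘ .inl, z ∘ .inr, fun i => hz _, hAx, fun o => hz _, hyA, le_antisymm hsum ?_⟩
    simpa using mul_sum_le_mul_sum_of_le_mulVec (s := 1) (t := 1) A (fun i => hz _)
      (fun o => hz _) (fun o => hAx o) (fun i => hyA i)
  -- The multipliers make `mu / nu` a cover and `lam / nu` a packing with `∑ mu < ∑ lam`,
  -- against weak duality; if `nu = 0`, compare `lam` with the cover `x₀` instead.
  · set lam : O → 𝕜 := fun o => l (.inl (.inl o))
    set mu : I → 𝕜 := fun i => l (.inl (.inr i))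
    set nu : 𝕜 := l (.inr ())
    have hlam : ∀ i, (lam ᵥ* A) i ≤ nu := fun i => by
      simpa [vecMul, dotProduct] using hlM (.inl i)
    have hmu : ∀ o, nu ≤ (A *ᵥ mu) o := fun o => by
      simpa [vecMul, mulVec, dotProduct, mul_comm] using hlM (.inr o)
    have hcost : ∑ i, mu i < ∑ o, lam o := by
      simpa [dotProduct, Fintype.sum_sum_type] using hlc
    have hlam0 : 0 ≤ lam := fun o => hl _
    have hmu0 : 0 ≤ mu := fun i => hl _
    have hnu0 : 0 ≤ nu := hl _
    rcases hnu0.eq_or_lt with hnu | hnu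
    · have := mul_sum_le_mul_sum_of_le_mulVec (s := 1) A hx₀ hlam0 (fun o => hAx₀ o) hlam
      rw [← hnu, zero_mul, one_mul] at this
      linarith [Finset.sum_nonneg fun i (_ : i ∈ Finset.univ) => hmu0 i]
    · have := mul_sum_le_mul_sum_of_le_mulVec A hmu0 hlam0 hmu hlam
      linarith [le_of_mul_le_mul_left this hnu]

end Duality

theorem card_le_sum_mul {I U : Type*} [Fintype I] [Fintype U] (Sets : I → Set U) {ℓ : ℕ}
    (hsize : ∀ i, (Sets i).ncard ≤ ℓ) {x : I → ℝ} (hx : 0 ≤ x)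
    (hcover : ∀ u, 1 ≤ ∑ i, {i | u ∈ Sets i}.indicator x i) :
    (Fintype.card U : ℝ) ≤ (∑ i, x i) * ℓ := by
  classical
  calc (Fintype.card U : ℝ) = ∑ _u : U, (1 : ℝ) := by simp
    _ ≤ ∑ u, ∑ i, {i | u ∈ Sets i}.indicator x i := Finset.sum_le_sum fun u _ => hcover u
    _ = ∑ i, x i * (Sets i).ncard := by
      rw [Finset.sum_comm]
      refine Finset.sum_congr rfl fun i _ => ?_
      simp [Set.indicator_apply, Finset.sum_ite, Set.ncard_eq_toFinset_card', mul_comm]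
    _ ≤ ∑ i, x i * ℓ := by gcongr with i; exact hx i; exact_mod_cast hsize i
    _ = (∑ i, x i) * ℓ := (Finset.sum_mul ..).symm

theorem exists_pos_forall_natCast_eq_mul {ι : Type*} [Fintype ι] (y : ι → ℚ) (hy : 0 ≤ y) :
    ∃ N : ℕ, 0 < N ∧ ∃ s : ι → ℕ, ∀ i, (s i : ℚ) = y i * N := by
  refine ⟨∏ i, (y i).den, Finset.prod_pos fun i _ => (y i).pos, ?_⟩
  have (i : ι) : ∃ s : ℕ, (s : ℚ) = y i * ↑(∏ i, (y i).den) := by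
    obtain ⟨k, hk⟩ := Finset.dvd_prod_of_mem (fun i => (y i).den) (Finset.mem_univ i)
    refine ⟨(y i).num.toNat * k, ?_⟩
    have hnum : (((y i).num.toNat : ℕ) : ℚ) = (y i).num := by
      exact_mod_cast Int.toNat_of_nonneg (Rat.num_nonneg.2 (hy i))
    rw [hk, Nat.cast_mul, Nat.cast_mul, ← mul_assoc, Rat.mul_den_eq_num, hnum]
  choose s hs using this
  exact ⟨s, hs⟩

theorem natCard_sigma_subtype {ι : Type*} [Fintype ι] (s : ι → ℕ) (p : ι → Prop) :
    Nat.card {t : Σ a, Fin (s a) // p t.1} = ∑ a, {a | p a}.indicator s a := by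
  classical
  rw [Nat.card_eq_fintype_card, Fintype.card_subtype, Finset.card_filter, Fintype.sum_sigma]
  exact Finset.sum_congr rfl fun a _ => by by_cases ha : p a <;> simp [ha]

section Spanoid

variable {X : Type} (S : SpanoidOn X)

theorem subset_sSpan (T : Set X) : T ⊆ sSpan S T :=
  fun _ hx => Set.mem_sInter.2 fun _ hT' => hT'.1 hx

theorem sSpan_subset {T T' : Set X} (hT : T ⊆ T') (hT' : ∀ p ∈ S, p.1 ⊆ T' → p.2 ∈ T') :
    sSpan S T ⊆ T' :=
  Set.sInter_subset_of_mem ⟨hT, hT'⟩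

theorem mem_sSpan_of_subset {T : Set X} {p : Set X × X} (hp : p ∈ S) (h : p.1 ⊆ sSpan S T) :
    p.2 ∈ sSpan S T :=
  Set.mem_sInter.2 fun T' hT' => hT'.2 p hp fun _ hx => Set.mem_sInter.1 (h hx) T' hT'

theorem mem_sSpan_of_mem {p : Set X × X} (hp : p ∈ S) : p.2 ∈ sSpan S p.1 :=
  mem_sSpan_of_subset S hp (subset_sSpan S p.1)

variable {S} in
theorem sOpen.exists_mem_of_mem_sSpan {A B : Set X} {i : X} (hB : sOpen S B)
    (hi : i ∈ sSpan S A) (hiB : i ∈ B) : ∃ a ∈ A, a ∈ B := by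
  by_contra! h
  have hclosed : ∀ p ∈ S, p.1 ⊆ Bᶜ → p.2 ∈ Bᶜ := fun p hp hp1 =>
    hB ▸ mem_sSpan_of_subset S hp (hp1.trans (subset_sSpan S _))
  exact sSpan_subset S h hclosed hi hiB

theorem sOpen_setOf_mem {U : Type*} (Sets : X → Set U)
    (hrep : ∀ A i, i ∈ sSpan S A → Sets i ⊆ ⋃ a ∈ A, Sets a) (u : U) :
    sOpen S {i | u ∈ Sets i} := by
  refine (sSpan_subset S subset_rfl fun p hp hp1 => ?_).antisymm (subset_sSpan S _)
  intro hu
  obtain ⟨a, ha, hua⟩ : ∃ a ∈ p.1, u ∈ Sets a := by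
    simpa using hrep _ _ (mem_sSpan_of_mem S hp) hu
  exact hp1 ha hua

theorem sConsistent_range {W K : Type} [Nonempty K] (E : W → X → K)
    (hE : ∀ p ∈ S, ∀ w w', (∀ a ∈ p.1, E w a = E w' a) → E w p.2 = E w' p.2) :
    sConsistent S (Set.range E) := by
  intro p hp
  have hfac : Function.FactorsThrough (fun w => E w p.2) fun w (a : p.1) => E w a :=
    fun w w' h => hE p hp w w' fun a ha => congrFun h ⟨a, ha⟩
  refine ⟨Function.extend (fun w (a : p.1) => E w a) (fun w => E w p.2)
    fun _ => Classical.arbitrary K, ?_⟩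
  rintro _ ⟨w, rfl⟩
  exact (hfac.extend_apply _ w).symm

theorem exists_sConsistent_card_eq_two_pow {T : Type} [Fintype T] (B : T → Set X)
    (hne : ∀ t, (B t).Nonempty) (hopen : ∀ t, sOpen S (B t)) {N : ℕ}
    (hN : ∀ i, Nat.card {t // i ∈ B t} ≤ N) :
    ∃ C : Set (X → Fin (2 ^ N)), sConsistent S C ∧ Nat.card C = 2 ^ Fintype.card T := by
  classical
  have enc (i : X) : ({t // i ∈ B t} → Fin 2) ↪ Fin (2 ^ N) :=
    Classical.choice <| Function.Embedding.nonempty_of_card_le <| by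
      simpa [← Nat.card_eq_fintype_card, Nat.card_fun, Nat.card_fin] using
        Nat.pow_le_pow_right two_pos (hN i)
  let E : (T → Fin 2) → X → Fin (2 ^ N) := fun w i => enc i fun t => w t
  have hE (w w' : T → Fin 2) (i : X) : E w i = E w' i ↔ ∀ t, i ∈ B t → w t = w' t := by
    simp [E, (enc i).injective.eq_iff, funext_iff]
  have hinj : Function.Injective E := fun w w' h => funext fun t =>
    (hE w w' _).1 (congrFun h (hne t).some) t (hne t).some_mem
  refine ⟨Set.range E, sConsistent_range S E fun p hp w w' hA => (hE ..).2 fun t ht => ?_, ?_⟩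
  · obtain ⟨a, ha, hat⟩ := (hopen t).exists_mem_of_mem_sSpan (mem_sSpan_of_mem S hp) ht
    exact (hE w w' a).1 (hA a ha) t hat
  · rw [Nat.card_range_of_injective hinj]
    simp [Nat.card_eq_fintype_card]

end Spanoid

section CoveringProgram

variable {X : Type} (S : SpanoidOn X)

def NonemptyOpen : Type := {B : Set X // B.Nonempty ∧ sOpen S B}

instance [Finite X] : Finite (NonemptyOpen S) :=
  inferInstanceAs (Finite {B : Set X // B.Nonempty ∧ sOpen S B})

noncomputable instance [Finite X] : Fintype (NonemptyOpen S) := Fintype.ofFinite _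

noncomputable def openIncidence (R : Type*) [Zero R] [One R] : Matrix (NonemptyOpen S) X R :=
  Matrix.of fun B i => B.1.indicator 1 i

theorem openIncidence_map {R R' : Type*} [NonAssocSemiring R] [NonAssocSemiring R']
    (f : R →+* R') : (openIncidence S R).map f = openIncidence S R' := by
  ext B i
  by_cases hi : i ∈ B.1 <;> simp [openIncidence, hi]

variable [Fintype X]

theorem openIncidence_mulVec {R : Type*} [NonAssocSemiring R] (x : X → R)
    (B : NonemptyOpen S) :
    (openIncidence S R *ᵥ x) B = ∑ i, B.1.indicator x i := by
  classical
  simp [openIncidence, mulVec, dotProduct, Set.indicator_apply]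

theorem vecMul_openIncidence {R : Type*} [NonAssocSemiring R] (y : NonemptyOpen S → R) (i : X) :
    (y ᵥ* openIncidence S R) i = ∑ B, {B : NonemptyOpen S | i ∈ B.1}.indicator y B := by
  classical
  simp [openIncidence, vecMul, dotProduct, Set.indicator_apply]

theorem map_openIncidence_mulVec {R R' : Type*} [NonAssocSemiring R] [NonAssocSemiring R']
    (f : R →+* R') (x : X → R) (B : NonemptyOpen S) :
    f ((openIncidence S R *ᵥ x) B) = (openIncidence S R' *ᵥ (f ∘ x)) B := by
  rw [RingHom.map_mulVec, openIncidence_map]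

theorem map_vecMul_openIncidence {R R' : Type*} [NonAssocSemiring R] [NonAssocSemiring R']
    (f : R →+* R') (y : NonemptyOpen S → R) (i : X) :
    f ((y ᵥ* openIncidence S R) i) = ((f ∘ y) ᵥ* openIncidence S R') i := by
  rw [RingHom.map_vecMul, openIncidence_map]

theorem one_le_openIncidence_mulVec_one {R : Type*} [Semiring R] [PartialOrder R]
    [IsOrderedRing R] : 1 ≤ openIncidence S R *ᵥ (1 : X → R) := fun B => by
  obtain ⟨i, hi⟩ := B.2.1
  rw [openIncidence_mulVec]
  simpa [hi] using Finset.single_le_sum (f := fun j => B.1.indicator (1 : X → R) j)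
    (fun j _ => Set.indicator_nonneg (fun _ _ => zero_le_one) j) (Finset.mem_univ i)

theorem sLPcover_le {x : X → ℝ} (hx : 0 ≤ x) (hAx : 1 ≤ openIncidence S ℝ *ᵥ x) :
    sLPcover S ≤ ∑ i, x i :=
  csInf_le ⟨0, by rintro _ ⟨x, hx, -, rfl⟩; exact Finset.sum_nonneg fun i _ => hx i⟩
    ⟨x, hx, fun B hB hBo => openIncidence_mulVec S x ⟨B, hB, hBo⟩ ▸ hAx ⟨B, hB, hBo⟩, rfl⟩

theorem le_sLPcover {r : ℝ} (h : ∀ x, 0 ≤ x → 1 ≤ openIncidence S ℝ *ᵥ x → r ≤ ∑ i, x i) :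
    r ≤ sLPcover S := by
  refine le_csInf ⟨_, 1, fun _ => zero_le_one, fun B hB hBo => ?_, rfl⟩ ?_
  · exact openIncidence_mulVec S (1 : X → ℝ) ⟨B, hB, hBo⟩ ▸
      one_le_openIncidence_mulVec_one (R := ℝ) S ⟨B, hB, hBo⟩
  · rintro _ ⟨x, hx, hxB, rfl⟩
    exact h x hx fun B => (openIncidence_mulVec S x B).symm ▸ hxB B.1 B.2.1 B.2.2

theorem exists_packing_sum_eq_sLPcover :
    ∃ y : NonemptyOpen S → ℚ, 0 ≤ y ∧ y ᵥ* openIncidence S ℚ ≤ 1 ∧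
      ((∑ B, y B : ℚ) : ℝ) = sLPcover S := by
  obtain ⟨x, y, hx, hAx, hy, hyA, hxy⟩ := exists_cover_packing_sum_eq (openIncidence S ℚ)
    ⟨1, zero_le_one, one_le_openIncidence_mulVec_one S⟩
  refine ⟨y, hy, hyA, le_antisymm (le_sLPcover S fun x' hx' hAx' => ?_) ?_⟩
  · have hyA' (i : X) : ((Rat.castHom ℝ ∘ y) ᵥ* openIncidence S ℝ) i ≤ 1 := by
      rw [← map_vecMul_openIncidence, Rat.coe_castHom]
      exact_mod_cast hyA i
    simpa using mul_sum_le_mul_sum_of_le_mulVec (s := 1) _ hx' (fun B => by simpa using hy B)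
      (fun B => hAx' B) hyA'
  · have hAx' (B : NonemptyOpen S) : 1 ≤ (openIncidence S ℝ *ᵥ (Rat.castHom ℝ ∘ x)) B := by
      rw [← map_openIncidence_mulVec, Rat.coe_castHom]
      exact_mod_cast hAx B
    calc sLPcover S ≤ ∑ i, Rat.castHom ℝ (x i) :=
          sLPcover_le S (fun i => by simpa using hx i) hAx'
      _ = _ := by rw [← map_sum, hxy]; rfl

theorem card_div_le_sLPcover {U : Type*} [Fintype U] (Sets : X → Set U) {ℓ : ℕ}
    (hcover : ⋃ i, Sets i = Set.univ) (hsize : ∀ i, (Sets i).ncard ≤ ℓ)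
    (hrep : ∀ A i, i ∈ sSpan S A → Sets i ⊆ ⋃ a ∈ A, Sets a) :
    (Fintype.card U : ℝ) / ℓ ≤ sLPcover S := by
  refine le_sLPcover S fun x hx hAx => div_le_of_le_mul₀ (Nat.cast_nonneg _)
    (Finset.sum_nonneg fun i _ => hx i) (card_le_sum_mul Sets hsize hx fun u => ?_)
  have hne : {i | u ∈ Sets i}.Nonempty := Set.iUnion_eq_univ_iff.1 hcover u
  exact (hAx ⟨_, hne, sOpen_setOf_mem S Sets hrep u⟩).trans_eq (openIncidence_mulVec S x _)

theorem exists_sConsistent_log_div_eq_sum (y : NonemptyOpen S → ℚ) (hy : 0 ≤ y)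
    (hyA : y ᵥ* openIncidence S ℚ ≤ 1) :
    ∃ m, 2 ≤ m ∧ ∃ C : Set (X → Fin m), sConsistent S C ∧
      Real.log (Nat.card C) / Real.log m = ((∑ B, y B : ℚ) : ℝ) := by
  obtain ⟨N, hN, s, hs⟩ := exists_pos_forall_natCast_eq_mul y hy
  have hsum : ((∑ B, s B : ℕ) : ℚ) = (∑ B, y B) * N := by
    push_cast [hs]; exact (Finset.sum_mul ..).symm
  obtain ⟨C, hC, hcard⟩ := exists_sConsistent_card_eq_two_pow S (T := Σ B, Fin (s B))
    (fun t => t.1.1) (fun t => t.1.2.1) (fun t => t.1.2.2) (N := N) fun i => by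
      refine (natCard_sigma_subtype s fun B : NonemptyOpen S => i ∈ B.1).trans_le ?_
      have hcol : ((∑ B, {B : NonemptyOpen S | i ∈ B.1}.indicator s B : ℕ) : ℚ) =
          (y ᵥ* openIncidence S ℚ) i * N := by
        rw [vecMul_openIncidence, Nat.cast_sum, Finset.sum_mul]
        exact Finset.sum_congr rfl fun B _ => by by_cases hB : i ∈ B.1 <;> simp [hB, hs]
      have : (y ᵥ* openIncidence S ℚ) i * N ≤ N := mul_le_of_le_one_left (by positivity) (hyA i)
      exact_mod_cast hcol ▸ this
  refine ⟨2 ^ N, Nat.le_self_pow hN.ne' 2, C, hC, ?_⟩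
  have hsumR : ((∑ B, s B : ℕ) : ℝ) = ((∑ B, y B : ℚ) : ℝ) * N := by
    exact_mod_cast congrArg (Rat.cast : ℚ → ℝ) hsum
  rw [hcard, Fintype.card_sigma]
  simp only [Fintype.card_fin]
  rw [Nat.cast_pow, Nat.cast_pow, Real.log_pow, Real.log_pow, hsumR]
  have : Real.log 2 ≠ 0 := by positivity
  field_simp

theorem log_div_le_sFrank {m : ℕ} (hm : 2 ≤ m) {C : Set (X → Fin m)} (hC : sConsistent S C) :
    Real.log (Nat.card C) / Real.log m ≤ sFrank S := by
  refine le_csSup ⟨Fintype.card X, ?_⟩ ⟨m, hm, C, hC, rfl⟩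
  rintro _ ⟨m, hm, C, -, rfl⟩
  have hcard : Nat.card C ≤ m ^ Fintype.card X := by
    refine (Nat.card_le_card_of_injective (Subtype.val : C → X → Fin m)
      Subtype.val_injective).trans_eq ?_
    simp [Nat.card_fun, Nat.card_eq_fintype_card]
  rw [div_le_iff₀ (Real.log_pos (by exact_mod_cast hm)), ← Real.log_pow]
  rcases (Nat.card C).eq_zero_or_pos with h | h
  · simp [h]; positivity
  · exact Real.log_le_log (by exact_mod_cast h) (by exact_mod_cast hcard)

end CoveringProgram

/-- (a) any union set-representation of `S` by sets of size at most `ℓ` from a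
universe `U` satisfies `|U|/ℓ ≤ LP^cover(S)` (so every code from such a representation has
dimension at most `LP^cover(S)`); (b) `f-rank(S) ≥ LP^cover(S)`, witnessed by a consistent
code of dimension exactly `LP^cover(S)`. -/
theorem LPcover_vs_set_representations {n : ℕ} (S : SpanoidOn (Fin n)) :
    (∀ (U : Type) (_ : Fintype U) (Sets : Fin n → Set U) (ℓ : ℕ), 1 ≤ ℓ →
        (⋃ i, Sets i) = Set.univ →
        (∀ i, (Sets i).ncard ≤ ℓ) →
        (∀ (A : Set (Fin n)) (i : Fin n),
          i ∈ sSpan S A ↔ Sets i ⊆ ⋃ a ∈ A, Sets a) →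
        (Fintype.card U : ℝ) / (ℓ : ℝ) ≤ sLPcover S) ∧
    sLPcover S ≤ sFrank S ∧
    (∃ m : ℕ, 2 ≤ m ∧ ∃ C : Set (Fin n → Fin m), sConsistent S C ∧
      Real.log (Nat.card C) / Real.log m = sLPcover S) := by
  obtain ⟨y, hy, hyA, hLP⟩ := exists_packing_sum_eq_sLPcover S
  obtain ⟨m, hm, C, hC, hdim⟩ := exists_sConsistent_log_div_eq_sum S y hy hyA
  rw [hLP] at hdim
  exact ⟨fun U _ Sets _ _ hcover hsize hrep =>
      card_div_le_sLPcover S Sets hcover hsize fun A i => (hrep A i).1,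
    hdim ▸ log_div_le_sFrank S hm hC, m, hm, C, hC, hdim⟩
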